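/- arXiv:2006.03579 — 3 statements merged into one kernel-verified Lean document; each statement's English description precedes it below -/
import Mathlib

section
/- Let (X, μ) be a measure space, let g, h : X → [0, ∞) be measurable, let s > 1 be real, and let k, i be integers with 0 < k < i. If ∫_X g dμ and ∫_X g·h^{s^i − 1} dμ are finite, then (∫_X g·h^{s^k − 1} dμ)^{1/s^k} ≤ ∫_X g dμ + (∫_X g·h^{s^i − 1} dμ)^{1/s^i}. -/
/-!
Write `P = s^k ≤ Q = s^i`. With `θ = (P - 1) / (Q - 1)` one has
`g h^(P-1) = g^(1-θ) (g h^(Q-1))^θ`, so Hölder's inequality with exponents `1 - θ` and `θ` bounds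
`∫ g h^(P-1)` by `(∫ g)^(1-θ) (∫ g h^(Q-1))^θ`. After taking the `P`-th root this is a weighted
geometric mean of `∫ g` and `(∫ g h^(Q-1))^(1/Q)` whose weights add up to `1`, hence it is at most
their sum.
-/

open MeasureTheory

theorem integral_rpow_mul_rpow_le {α : Type*} [MeasurableSpace α] {μ : Measure α} {f g : α → ℝ}
    (hf0 : 0 ≤ᵐ[μ] f) (hg0 : 0 ≤ᵐ[μ] g) (hf : Integrable f μ) (hg : Integrable g μ)
    {p q : ℝ} (hp : 0 ≤ p) (hq : 0 ≤ q) (hpq : p + q = 1) :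
    ∫ x, f x ^ p * g x ^ q ∂μ ≤ (∫ x, f x ∂μ) ^ p * (∫ x, g x ∂μ) ^ q := by
  have hfg0 : 0 ≤ᵐ[μ] fun x => f x ^ p * g x ^ q := by
    filter_upwards [hf0, hg0] with x hfx hgx
    exact mul_nonneg (Real.rpow_nonneg hfx p) (Real.rpow_nonneg hgx q)
  have hfg : AEStronglyMeasurable (fun x => f x ^ p * g x ^ q) μ :=
    ((hf.aemeasurable.pow_const p).mul (hg.aemeasurable.pow_const q)).aestronglyMeasurable
  have hofReal : ∀ᵐ x ∂μ, ENNReal.ofReal (f x ^ p * g x ^ q)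
      = ENNReal.ofReal (f x) ^ p * ENNReal.ofReal (g x) ^ q := by
    filter_upwards [hf0, hg0] with x hfx hgx
    rw [ENNReal.ofReal_mul (Real.rpow_nonneg hfx p), ENNReal.ofReal_rpow_of_nonneg hfx hp,
      ENNReal.ofReal_rpow_of_nonneg hgx hq]
  rw [integral_eq_lintegral_of_nonneg_ae hfg0 hfg, integral_eq_lintegral_of_nonneg_ae hf0 hf.1,
    integral_eq_lintegral_of_nonneg_ae hg0 hg.1, ENNReal.toReal_rpow, ENNReal.toReal_rpow,
    ← ENNReal.toReal_mul, lintegral_congr_ae hofReal]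
  refine ENNReal.toReal_mono ?_ (ENNReal.lintegral_mul_norm_pow_le
    hf.aemeasurable.ennreal_ofReal hg.aemeasurable.ennreal_ofReal hp hq hpq)
  exact ENNReal.mul_ne_top (ENNReal.rpow_ne_top_of_nonneg hp hf.lintegral_lt_top.ne)
    (ENNReal.rpow_ne_top_of_nonneg hq hg.lintegral_lt_top.ne)

theorem rpow_mul_rpow_le_add {a b u v : ℝ} (ha : 0 ≤ a) (hb : 0 ≤ b) (hu : 0 ≤ u) (hv : 0 ≤ v)
    (huv : u + v = 1) : a ^ u * b ^ v ≤ a + b := by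
  have hu1 : u * a ≤ a := mul_le_of_le_one_left ha (by linarith)
  have hv1 : v * b ≤ b := mul_le_of_le_one_left hb (by linarith)
  linarith [Real.geom_mean_le_arith_mean2_weighted hu hv ha hb huv]

theorem integral_mul_rpow_sub_one_rpow_le {X : Type*} [MeasurableSpace X] {μ : Measure X}
    {g h : X → ℝ} (hg0 : ∀ x, 0 ≤ g x) (hh0 : ∀ x, 0 ≤ h x) {P Q : ℝ} (hP : 1 ≤ P) (hPQ : P ≤ Q)
    (hg : Integrable g μ) (hgh : Integrable (fun x => g x * h x ^ (Q - 1)) μ) :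
    (∫ x, g x * h x ^ (P - 1) ∂μ) ^ (1 / P) ≤
      (∫ x, g x ∂μ) + (∫ x, g x * h x ^ (Q - 1) ∂μ) ^ (1 / Q) := by
  set θ := (P - 1) / (Q - 1) with hθdef
  have hθ0 : 0 ≤ θ := div_nonneg (by linarith) (by linarith)
  have hθ1 : θ ≤ 1 := div_le_one_of_le₀ (by linarith) (by linarith)
  have hθ : (Q - 1) * θ = P - 1 := by
    rcases eq_or_lt_of_le (hP.trans hPQ) with hQ | hQ
    · -- then `P = 1` too, and `θ = 0 / 0 = 0`
      simp [hθdef, ← hQ, le_antisymm (hQ ▸ hPQ) hP]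
    · exact mul_div_cancel₀ _ (by linarith)
  have hsplit : ∀ x, g x * h x ^ (P - 1) = g x ^ (1 - θ) * (g x * h x ^ (Q - 1)) ^ θ := by
    intro x
    rw [Real.mul_rpow (hg0 x) (Real.rpow_nonneg (hh0 x) _), ← Real.rpow_mul (hh0 x), hθ,
      ← mul_assoc, ← Real.rpow_add' (hg0 x) (by norm_num), sub_add_cancel, Real.rpow_one]
  set A := ∫ x, g x ∂μ
  set B := ∫ x, g x * h x ^ (Q - 1) ∂μ
  have hA : 0 ≤ A := integral_nonneg hg0
  have hB : 0 ≤ B := integral_nonneg fun x => mul_nonneg (hg0 x) (Real.rpow_nonneg (hh0 x) _)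
  have holder : ∫ x, g x * h x ^ (P - 1) ∂μ ≤ A ^ (1 - θ) * B ^ θ := by
    simp_rw [hsplit]
    exact integral_rpow_mul_rpow_le (.of_forall hg0)
      (.of_forall fun x => mul_nonneg (hg0 x) (Real.rpow_nonneg (hh0 x) _)) hg hgh
      (by linarith) hθ0 (by ring)
  have hP0 : 0 < P := by linarith
  have hQ0 : 0 < Q := by linarith
  calc (∫ x, g x * h x ^ (P - 1) ∂μ) ^ (1 / P)
      ≤ (A ^ (1 - θ) * B ^ θ) ^ (1 / P) :=
        Real.rpow_le_rpow (integral_nonneg fun x => mul_nonneg (hg0 x) (Real.rpow_nonneg (hh0 x) _))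
          holder (by positivity)
    _ = A ^ ((1 - θ) / P) * (B ^ (1 / Q)) ^ (θ * Q / P) := by
        rw [Real.mul_rpow (Real.rpow_nonneg hA _) (Real.rpow_nonneg hB _), ← Real.rpow_mul hA,
          ← Real.rpow_mul hB, ← Real.rpow_mul hB]
        congr 2 <;> field_simp
    _ ≤ A + B ^ (1 / Q) := by
        refine rpow_mul_rpow_le_add hA (Real.rpow_nonneg hB _)
          (div_nonneg (by linarith) hP0.le) (by positivity) ?_
        field_simp
        linarith

theorem stmt_5_general {X : Type*} [MeasurableSpace X] (μ : Measure X) (g h : X → ℝ)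
    (hg0 : ∀ x, 0 ≤ g x) (hh0 : ∀ x, 0 ≤ h x)
    (s : ℝ) (hs : 1 < s) (k i : ℕ) (hki : k < i)
    (hint1 : Integrable g μ)
    (hint2 : Integrable (fun x => g x * h x ^ (s ^ i - 1)) μ) :
    (∫ x, g x * h x ^ (s ^ k - 1) ∂μ) ^ (1 / s ^ k) ≤
      (∫ x, g x ∂μ) + (∫ x, g x * h x ^ (s ^ i - 1) ∂μ) ^ (1 / s ^ i) :=
  integral_mul_rpow_sub_one_rpow_le hg0 hh0 (one_le_pow₀ hs.le) (pow_le_pow_right₀ hs.le hki.le)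
    hint1 hint2

theorem stmt_5 {X : Type*} [MeasurableSpace X] (μ : Measure X) (g h : X → ℝ)
    (hg : Measurable g) (hh : Measurable h) (hg0 : ∀ x, 0 ≤ g x) (hh0 : ∀ x, 0 ≤ h x)
    (s : ℝ) (hs : 1 < s) (k i : ℕ) (hk : 0 < k) (hki : k < i)
    (hint1 : Integrable g μ)
    (hint2 : Integrable (fun x => g x * h x ^ (s ^ i - 1)) μ) :
    (∫ x, g x * h x ^ (s ^ k - 1) ∂μ) ^ (1 / s ^ k) ≤
      (∫ x, g x ∂μ) + (∫ x, g x * h x ^ (s ^ i - 1) ∂μ) ^ (1 / s ^ i) :=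
  stmt_5_general μ g h hg0 hh0 s hs k i hki hint1 hint2
end

section
/- Let M > 0, ℓ ≥ 0, and let r : I → (2M, ∞), w : I → ℝ be differentiable with r' = w and w' = (r − 3M)ℓ²/r⁴. Let k > 0 be a constant with k² = w² + (1 − 2M/r)ℓ²/r² on I (so this holds at one point, hence everywhere by conservation). Set v_u = (−k − w)/2 and v_u̲ = (−k + w)/2, so v_u, v_u̲ ≤ 0. Then for all s ∈ I: d/ds [ 2|v_u| / (1 − 2M/r) ] = −(4M/r²)·|v_u|²/(1 − 2M/r)² + (4/r)·|v_u̲|·|v_u|/(1 − 2M/r), and d/ds [ (1 − 2M/r)·k ] = (2M/r²)·(|v_u|² − |v_u̲|²). -/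
/-!
Write `u = 1 - 2M/r`. The conservation law says `k² - w² = u ℓ²/r²`, which bounds `|w|` by `k`;
hence `|v_u| = (k + w)/2` and `|v_u̲| = (k - w)/2`, and `4 |v_u̲| |v_u| = u ℓ²/r²`. Both quantities
are then smooth expressions in `r` and `w`: the first is `(k + w)/u`, differentiated by the
quotient rule with `u' = 2Mw/r²`, and the mass-shell relation turns the result into the stated
form; the second is `u k`, with `|v_u|² - |v_u̲|² = k w`.
-/

lemma abs_le_of_sq_eq_sq_add {k w c : ℝ} (hk : 0 ≤ k) (hc : 0 ≤ c) (h : k ^ 2 = w ^ 2 + c) :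
    |w| ≤ k :=
  abs_le_of_sq_le_sq (by linarith) hk

lemma abs_neg_sub_div_two_of_abs_le {k w : ℝ} (h : |w| ≤ k) : |(-k - w) / 2| = (k + w) / 2 := by
  rw [abs_of_nonpos (by linarith [neg_abs_le w])]
  ring

lemma abs_neg_add_div_two_of_abs_le {k w : ℝ} (h : |w| ≤ k) : |(-k + w) / 2| = (k - w) / 2 := by
  rw [abs_of_nonpos (by linarith [le_abs_self w])]
  ring

lemma one_sub_two_mul_div_pos {M r : ℝ} (hM : 0 < M) (hr : 2 * M < r) : 0 < 1 - 2 * M / r := by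
  rw [sub_pos, div_lt_one (by linarith)]
  exact hr

lemma HasDerivWithinAt.one_sub_two_mul_div {r : ℝ → ℝ} {r' M x : ℝ} {s : Set ℝ}
    (hr : HasDerivWithinAt r r' s x) (hx : r x ≠ 0) :
    HasDerivWithinAt (fun t => 1 - 2 * M / r t) (2 * M * r' / r x ^ 2) s x := by
  refine (((hasDerivWithinAt_const x s (2 * M)).div hr hx).const_sub 1).congr_deriv ?_
  ring

/-- The quotient-rule derivative of `(k + w)/u` along the geodesic flow, rewritten with the
mass-shell relation. -/
lemma redshift_quotient_deriv_eq {M ℓ k r w : ℝ} (hr : r ≠ 0)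
    (hcons : k ^ 2 = w ^ 2 + (1 - 2 * M / r) * ℓ ^ 2 / r ^ 2) :
    ((r - 3 * M) * ℓ ^ 2 / r ^ 4 * (1 - 2 * M / r) - (k + w) * (2 * M * w / r ^ 2))
        / (1 - 2 * M / r) ^ 2
      = -(4 * M / r ^ 2) * ((k + w) / 2) ^ 2 / (1 - 2 * M / r) ^ 2
        + 4 / r * ((k - w) / 2 * ((k + w) / 2)) / (1 - 2 * M / r) := by
  rw [one_sub_div hr] at *
  field_simp
  field_simp at hcons
  congr 1
  linear_combination (-4 * (r - 3 * M)) * hcons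

theorem stmt_12_general (M ℓ k : ℝ) (hM : 0 < M) (hk : 0 < k)
    (I : Set ℝ) (r w : ℝ → ℝ)
    (hr2M : ∀ s ∈ I, 2 * M < r s)
    (hr : ∀ s ∈ I, HasDerivWithinAt r (w s) I s)
    (hw : ∀ s ∈ I, HasDerivWithinAt w ((r s - 3 * M) * ℓ ^ 2 / (r s) ^ 4) I s)
    (hcons : ∀ s ∈ I, k ^ 2 = (w s) ^ 2 + (1 - 2 * M / r s) * ℓ ^ 2 / (r s) ^ 2) :
    ∀ s ∈ I,
      HasDerivWithinAt (fun t => 2 * |(-k - w t) / 2| / (1 - 2 * M / r t))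
        (-(4 * M / (r s) ^ 2) * |(-k - w s) / 2| ^ 2 / (1 - 2 * M / r s) ^ 2
          + 4 / r s * (|(-k + w s) / 2| * |(-k - w s) / 2|) / (1 - 2 * M / r s)) I s ∧
      HasDerivWithinAt (fun t => (1 - 2 * M / r t) * k)
        (2 * M / (r s) ^ 2 * (|(-k - w s) / 2| ^ 2 - |(-k + w s) / 2| ^ 2)) I s := by
  have hu_pos : ∀ t ∈ I, 0 < 1 - 2 * M / r t := fun t ht => one_sub_two_mul_div_pos hM (hr2M t ht)
  have hw_le : ∀ t ∈ I, |w t| ≤ k := fun t ht =>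
    abs_le_of_sq_eq_sq_add hk.le
      (div_nonneg (mul_nonneg (hu_pos t ht).le (sq_nonneg ℓ)) (sq_nonneg _)) (hcons t ht)
  intro s hs
  have hrs : r s ≠ 0 := (show 0 < r s by linarith [hr2M s hs]).ne'
  have hu := (hr s hs).one_sub_two_mul_div (M := M) hrs
  rw [abs_neg_sub_div_two_of_abs_le (hw_le s hs), abs_neg_add_div_two_of_abs_le (hw_le s hs)]
  constructor
  · rw [← redshift_quotient_deriv_eq hrs (hcons s hs)]
    refine (((hw s hs).const_add k).div hu (hu_pos s hs).ne').congr_of_mem (fun t ht => ?_) hs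
    simp only [Pi.div_apply, abs_neg_sub_div_two_of_abs_le (hw_le t ht)]
    ring
  · refine (hu.mul_const k).congr_deriv ?_
    ring

theorem stmt_12 (M ℓ k : ℝ) (hM : 0 < M) (hℓ : 0 ≤ ℓ) (hk : 0 < k)
    (I : Set ℝ) (hI : Convex ℝ I) (r w : ℝ → ℝ)
    (hr2M : ∀ s ∈ I, 2 * M < r s)
    (hr : ∀ s ∈ I, HasDerivWithinAt r (w s) I s)
    (hw : ∀ s ∈ I, HasDerivWithinAt w ((r s - 3 * M) * ℓ ^ 2 / (r s) ^ 4) I s)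
    (hcons : ∀ s ∈ I, k ^ 2 = (w s) ^ 2 + (1 - 2 * M / r s) * ℓ ^ 2 / (r s) ^ 2) :
    ∀ s ∈ I,
      HasDerivWithinAt (fun t => 2 * |(-k - w t) / 2| / (1 - 2 * M / r t))
        (-(4 * M / (r s) ^ 2) * |(-k - w s) / 2| ^ 2 / (1 - 2 * M / r s) ^ 2
          + 4 / r s * (|(-k + w s) / 2| * |(-k - w s) / 2|) / (1 - 2 * M / r s)) I s ∧
      HasDerivWithinAt (fun t => (1 - 2 * M / r t) * k)
        (2 * M / (r s) ^ 2 * (|(-k - w s) / 2| ^ 2 - |(-k + w s) / 2| ^ 2)) I s :=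
  stmt_12_general M ℓ k hM hk I r w hr2M hr hw hcons
end

section
/- Let M > 0, ℓ ≥ 0, k > 0, and let r : I → (2M, ∞), w : I → ℝ be differentiable with r' = w, w' = (r − 3M)ℓ²/r⁴ and k² = w² + (1 − 2M/r)ℓ²/r² on I. Set v_u̲ = (−k + w)/2 ≤ 0 and v_t = −k. Then for any real p, q with 0 ≤ p ≤ 2q, the function F = r^p·(|v_u̲|/k)^q satisfies, wherever v_u̲ < 0: −F' = p·r^{p−1}·|v_u̲|^{q+1}/k^q + (1/4)(2q − p)·r^{p−1}·(|v_u̲|^{q−1}/k^q)·(ℓ²/r²) − (3q − p)·(M/2)·r^{p−2}·(|v_u̲|^{q−1}/k^q)·(ℓ²/r²). -/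
/-!
Where `v_u̲ < 0` we have `|v_u̲| = (k - w)/2`, whose derivative along the geodesic is `-w'/2`.
The product rule gives `F' = p r^{p-1} w (|v_u̲|/k)^q + q r^p (|v_u̲|/k)^{q-1} (-w'/2)/k`.
Writing `w = k - 2|v_u̲|` and eliminating `k |v_u̲|` through the mass shell
`4 |v_u̲| (k - |v_u̲|) = (1 - 2M/r) ℓ²/r²` turns this into the stated identity.
-/

theorem HasDerivWithinAt.abs_of_neg {f : ℝ → ℝ} {f' x : ℝ} {s : Set ℝ}
    (hf : HasDerivWithinAt f f' s x) (hx : f x < 0) :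
    HasDerivWithinAt (fun t => |f t|) (-f') s x :=
  ((hasDerivAt_abs_neg hx).comp_hasDerivWithinAt x hf).congr_deriv (neg_one_mul f')

theorem rpow_weight_deriv_eq_of_mass_shell {M ℓ k R a : ℝ} (p q : ℝ) (hR : 0 < R) (ha : 0 < a)
    (hk : 0 < k) (hshell : 4 * a * (k - a) = (1 - 2 * M / R) * ℓ ^ 2 / R ^ 2) :
    p * R ^ (p - 1) * (k - 2 * a) * (a / k) ^ q
        + q * R ^ p * (a / k) ^ (q - 1) * (-((R - 3 * M) * ℓ ^ 2 / R ^ 4 / 2) / k)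
      = -(p * R ^ (p - 1) * a ^ (q + 1) / k ^ q
          + 1 / 4 * (2 * q - p) * R ^ (p - 1) * (a ^ (q - 1) / k ^ q) * (ℓ ^ 2 / R ^ 2)
          - (3 * q - p) * (M / 2) * R ^ (p - 2) * (a ^ (q - 1) / k ^ q) * (ℓ ^ 2 / R ^ 2)) := by
  have hshell' : 4 * a * (k - a) * R ^ 3 = (R - 2 * M) * ℓ ^ 2 := by
    field_simp at hshell
    linear_combination hshell
  rw [Real.div_rpow ha.le hk.le, Real.div_rpow ha.le hk.le, Real.rpow_sub hR, Real.rpow_sub hR,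
    Real.rpow_sub ha, Real.rpow_sub hk, Real.rpow_add ha]
  simp only [Real.rpow_one, Real.rpow_two]
  field_simp
  linear_combination (2 * p) * hshell'

theorem stmt_13_general (M ℓ k p q : ℝ) (hM : 0 < M) (hk : 0 < k)
    (I : Set ℝ) (r w : ℝ → ℝ)
    (hr2M : ∀ s ∈ I, 2 * M < r s)
    (hr : ∀ s ∈ I, HasDerivWithinAt r (w s) I s)
    (hw : ∀ s ∈ I, HasDerivWithinAt w ((r s - 3 * M) * ℓ ^ 2 / (r s) ^ 4) I s)
    (hcons : ∀ s ∈ I, k ^ 2 = (w s) ^ 2 + (1 - 2 * M / r s) * ℓ ^ 2 / (r s) ^ 2) :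
    ∀ s ∈ I, (-k + w s) / 2 < 0 →
      HasDerivWithinAt (fun t => (r t) ^ p * (|(-k + w t) / 2| / k) ^ q)
        (-(p * (r s) ^ (p - 1) * |(-k + w s) / 2| ^ (q + 1) / k ^ q
          + 1 / 4 * (2 * q - p) * (r s) ^ (p - 1) *
            (|(-k + w s) / 2| ^ (q - 1) / k ^ q) * (ℓ ^ 2 / (r s) ^ 2)
          - (3 * q - p) * (M / 2) * (r s) ^ (p - 2) *
            (|(-k + w s) / 2| ^ (q - 1) / k ^ q) * (ℓ ^ 2 / (r s) ^ 2))) I s := by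
  intro s hs hneg
  have hR : 0 < r s := by linarith [hr2M s hs]
  have ha : 0 < |(-k + w s) / 2| := abs_pos.2 hneg.ne
  have hvu := (((hw s hs).const_add (-k)).div_const 2).abs_of_neg hneg
  have hF := ((hr s hs).rpow_const (p := p) (Or.inl hR.ne')).mul
    ((hvu.div_const k).rpow_const (p := q) (Or.inl (div_pos ha hk).ne'))
  refine hF.congr_deriv ?_
  set a := |(-k + w s) / 2|
  have hw_eq : w s = k - 2 * a := by simp only [a, abs_of_neg hneg]; ring
  have hshell : 4 * a * (k - a) = (1 - 2 * M / r s) * ℓ ^ 2 / r s ^ 2 := by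
    have h := hcons s hs
    rw [hw_eq] at h
    linear_combination h
  rw [hw_eq]
  linear_combination rpow_weight_deriv_eq_of_mass_shell p q hR ha hk hshell

theorem stmt_13 (M ℓ k p q : ℝ) (hM : 0 < M) (hℓ : 0 ≤ ℓ) (hk : 0 < k)
    (hp : 0 ≤ p) (hpq : p ≤ 2 * q)
    (I : Set ℝ) (hI : Convex ℝ I) (r w : ℝ → ℝ)
    (hr2M : ∀ s ∈ I, 2 * M < r s)
    (hr : ∀ s ∈ I, HasDerivWithinAt r (w s) I s)
    (hw : ∀ s ∈ I, HasDerivWithinAt w ((r s - 3 * M) * ℓ ^ 2 / (r s) ^ 4) I s)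
    (hcons : ∀ s ∈ I, k ^ 2 = (w s) ^ 2 + (1 - 2 * M / r s) * ℓ ^ 2 / (r s) ^ 2) :
    ∀ s ∈ I, (-k + w s) / 2 < 0 →
      HasDerivWithinAt (fun t => (r t) ^ p * (|(-k + w t) / 2| / k) ^ q)
        (-(p * (r s) ^ (p - 1) * |(-k + w s) / 2| ^ (q + 1) / k ^ q
          + 1 / 4 * (2 * q - p) * (r s) ^ (p - 1) *
            (|(-k + w s) / 2| ^ (q - 1) / k ^ q) * (ℓ ^ 2 / (r s) ^ 2)
          - (3 * q - p) * (M / 2) * (r s) ^ (p - 2) *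
            (|(-k + w s) / 2| ^ (q - 1) / k ^ q) * (ℓ ^ 2 / (r s) ^ 2))) I s :=
  stmt_13_general M ℓ k p q hM hk I r w hr2M hr hw hcons
end
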